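/- Gentle Operator Lemma: let ρ be a d × d density matrix (positive semidefinite with unit trace), let Λ be a Hermitian d × d matrix with 0 ≤ Λ ≤ I (in the Loewner order), and let ε ≥ 0 satisfy Tr{Λρ} ≥ 1 − ε. Then ‖ρ − √Λ ρ √Λ‖₁ ≤ 2√ε, where √Λ is the positive semidefinite square root of Λ. -/

import Mathlib

open scoped ComplexOrder

noncomputable section

/-- The positive semidefinite square root, as `Matrix.PosSemidef.sqrt` was defined in the
older Mathlib (removed since). -/
def Matrix.PosSemidef.sqrt {n : Type*} [Fintype n] [DecidableEq n] {A : Matrix n n ℂ}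
    (hA : A.PosSemidef) : Matrix n n ℂ :=
  hA.1.eigenvectorUnitary.1 * Matrix.diagonal ((↑) ∘ (√·) ∘ hA.1.eigenvalues) *
    (star hA.1.eigenvectorUnitary : Matrix n n ℂ)

/-- The trace norm `‖A‖₁ = Tr √(AᴴA)` of a complex square matrix. -/
def traceNorm {d : ℕ} (A : Matrix (Fin d) (Fin d) ℂ) : ℝ :=
  ((Matrix.posSemidef_conjTranspose_mul_self A).sqrt.trace).re

/-!
Write `X = √Λ` and `B = √ρ`. Then `ρ - XρX = (1 - X)B · B + XB · B(1 - X)`, and the trace norm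
of a Hermitian matrix `M` equals `Re Tr (S M)` for the unitary `S = sign M`. By Cauchy–Schwarz
for the Hilbert–Schmidt inner product, each of the two terms is at most `‖(1 - X)B‖₂`, since
`‖B‖₂² = Tr ρ = 1` and `‖XB‖₂² = Tr (Λρ) ≤ 1`, while
`‖(1 - X)B‖₂² = Tr (ρ(1 - √Λ)²) ≤ Tr (ρ(1 - Λ)) ≤ ε` because `(1 - √x)² ≤ 1 - x` on `[0, 1]`.
-/

open Matrix
open scoped MatrixOrder

section

variable {n : Type*} [Fintype n] [DecidableEq n]

theorem Matrix.PosSemidef.sqrt_eq_cfcSqrt {A : Matrix n n ℂ} (hA : A.PosSemidef) :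
    hA.sqrt = CFC.sqrt A := by
  rw [CFC.sqrt_eq_cfc, cfc_nnreal_eq_real _ A hA.nonneg, hA.1.cfc_eq, IsHermitian.cfc,
    Unitary.conjStarAlgAut_apply]
  simp only [PosSemidef.sqrt, Function.comp_def, Real.coe_sqrt,
    Real.coe_toNNReal _ (hA.eigenvalues_nonneg _)]
  rfl

theorem Matrix.IsHermitian.exists_unitary_mul_eq_cfcAbs {M : Matrix n n ℂ} (hM : M.IsHermitian) :
    ∃ S ∈ unitary (Matrix n n ℂ), S * M = CFC.abs M := by
  have hM' : IsSelfAdjoint M := hM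
  have hcont (f : ℝ → ℝ) : ContinuousOn f (spectrum ℝ M) := M.finite_real_spectrum.continuousOn f
  let sign : ℝ → ℝ := fun x => if 0 ≤ x then 1 else -1
  refine ⟨cfc sign M, (cfc_unitary_iff sign M hM' (hcont sign)).2 fun x _ => ?_, ?_⟩
  · unfold sign; split_ifs <;> norm_num
  · nth_rw 2 [← cfc_id' ℝ M]
    rw [CFC.abs_eq_cfc_norm M, ← cfc_mul sign _ M (hcont _) (hcont _)]
    refine cfc_congr fun x _ => ?_
    unfold sign; split_ifs with h
    · simp [abs_of_nonneg h]
    · simp [abs_of_neg (not_le.1 h)]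

theorem traceNorm_le_of_forall_unitary {d : ℕ} {M : Matrix (Fin d) (Fin d) ℂ}
    (hM : M.IsHermitian) {c : ℝ}
    (h : ∀ S ∈ unitary (Matrix (Fin d) (Fin d) ℂ), (S * M).trace.re ≤ c) : traceNorm M ≤ c := by
  obtain ⟨S, hS, hSM⟩ := hM.exists_unitary_mul_eq_cfcAbs
  rw [traceNorm, PosSemidef.sqrt_eq_cfcSqrt]
  change (CFC.abs M).trace.re ≤ c
  rw [← hSM]
  exact h S hS

theorem Matrix.re_trace_conjTranspose_mul_le (A B : Matrix n n ℂ) :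
    (Aᴴ * B).trace.re ≤ √(Aᴴ * A).trace.re * √(Bᴴ * B).trace.re := by
  have h := @re_inner_le_norm ℂ _ _ (toMatrixSeminormedAddCommGroup 1 PosSemidef.one)
    (toMatrixInnerProductSpace 1 PosSemidef.one) A B
  simp only [@norm_eq_sqrt_re_inner ℂ _ _ (toMatrixSeminormedAddCommGroup 1 PosSemidef.one)
    (toMatrixInnerProductSpace 1 PosSemidef.one)] at h
  change (B * 1 * Aᴴ).trace.re ≤ √(A * 1 * Aᴴ).trace.re * √(B * 1 * Bᴴ).trace.re at h
  simpa only [Matrix.mul_one, trace_mul_comm _ Aᴴ, trace_mul_comm B Bᴴ] using h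

theorem Matrix.re_trace_unitary_mul_le {S : Matrix n n ℂ}
    (hS : S ∈ unitary (Matrix n n ℂ)) (A B : Matrix n n ℂ) :
    (S * (A * Bᴴ)).trace.re ≤ √(Aᴴ * A).trace.re * √(Bᴴ * B).trace.re := by
  have hSA : (S * A)ᴴ * (S * A) = Aᴴ * A := by
    have hS' : Sᴴ * S = 1 := Unitary.star_mul_self_of_mem hS
    rw [conjTranspose_mul, Matrix.mul_assoc, ← Matrix.mul_assoc Sᴴ, hS', Matrix.one_mul]
  rw [← Matrix.mul_assoc, trace_mul_comm, ← hSA, mul_comm]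
  exact re_trace_conjTranspose_mul_le B (S * A)

theorem Matrix.trace_conjTranspose_mul_self_mul_cfcSqrt {ρ : Matrix n n ℂ} (hρ : 0 ≤ ρ)
    (C : Matrix n n ℂ) :
    ((C * CFC.sqrt ρ)ᴴ * (C * CFC.sqrt ρ)).trace = (Cᴴ * C * ρ).trace := by
  have hB : (CFC.sqrt ρ)ᴴ = CFC.sqrt ρ := (IsSelfAdjoint.of_nonneg (CFC.sqrt_nonneg ρ)).star_eq
  rw [conjTranspose_mul, hB, Matrix.mul_assoc, trace_mul_comm, Matrix.mul_assoc, Matrix.mul_assoc,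
    CFC.sqrt_mul_sqrt_self ρ hρ, Matrix.mul_assoc]

theorem Matrix.re_trace_mul_le_of_le {ρ Y Z : Matrix n n ℂ} (hρ : 0 ≤ ρ) (hYZ : Y ≤ Z) :
    (Y * ρ).trace.re ≤ (Z * ρ).trace.re := by
  have hB : IsSelfAdjoint (CFC.sqrt ρ) := IsSelfAdjoint.of_nonneg (CFC.sqrt_nonneg ρ)
  have hconj (T : Matrix n n ℂ) : (CFC.sqrt ρ * T * CFC.sqrt ρ).trace = (T * ρ).trace := by
    rw [Matrix.mul_assoc, trace_mul_comm, Matrix.mul_assoc, CFC.sqrt_mul_sqrt_self ρ hρ]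
  rw [← hconj, ← hconj]
  exact (Complex.le_def.1 ((tracePositiveLinearMap n ℂ ℂ).mono (hB.conjugate_le_conjugate hYZ))).1

theorem Matrix.one_sub_cfcSqrt_sq_le {Λ : Matrix n n ℂ} (h0 : 0 ≤ Λ) (h1 : Λ ≤ 1) :
    (1 - CFC.sqrt Λ) ^ 2 ≤ 1 - Λ := by
  have hΛ : IsSelfAdjoint Λ := IsSelfAdjoint.of_nonneg h0
  have hspec := (CFC.le_one_iff (R := ℝ) Λ).1 h1
  have hL : (1 - CFC.sqrt Λ) ^ 2 = cfc (fun x : ℝ => (1 - √x) ^ 2) Λ := by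
    rw [cfc_pow .., cfc_sub .., cfc_const_one .., CFC.sqrt_eq_real_sqrt Λ, cfcₙ_eq_cfc]
  have hR : 1 - Λ = cfc (fun x : ℝ => 1 - x) Λ := by
    rw [cfc_sub .., cfc_const_one .., cfc_id' ..]
  rw [hL, hR]
  refine cfc_mono fun x hx => ?_
  have h0x : 0 ≤ x := spectrum_nonneg_of_nonneg (𝕜 := ℝ) h0 hx
  have hs : √x * √x = x := Real.mul_self_sqrt h0x
  have hs1 : √x ≤ 1 := Real.sqrt_le_one.2 (hspec x hx)
  nlinarith [Real.sqrt_nonneg x]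

theorem Matrix.re_trace_one_sub_cfcSqrt_mul_cfcSqrt_le {ρ Λ : Matrix n n ℂ} (hρ : 0 ≤ ρ)
    (hΛ0 : 0 ≤ Λ) (hΛ1 : Λ ≤ 1) :
    (((1 - CFC.sqrt Λ) * CFC.sqrt ρ)ᴴ * ((1 - CFC.sqrt Λ) * CFC.sqrt ρ)).trace.re ≤
      ((1 - Λ) * ρ).trace.re := by
  have hX : (CFC.sqrt Λ)ᴴ = CFC.sqrt Λ := (IsSelfAdjoint.of_nonneg (CFC.sqrt_nonneg Λ)).star_eq
  rw [trace_conjTranspose_mul_self_mul_cfcSqrt hρ, conjTranspose_sub, conjTranspose_one, hX, ← sq]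
  exact re_trace_mul_le_of_le hρ (one_sub_cfcSqrt_sq_le hΛ0 hΛ1)

end

theorem gentle_operator {d : ℕ} (ρ Λ : Matrix (Fin d) (Fin d) ℂ)
    (hρ : ρ.PosSemidef) (hρtr : ρ.trace = 1)
    (hΛ : Λ.PosSemidef) (hΛI : (1 - Λ).PosSemidef)
    (ε : ℝ) (h : 1 - ε ≤ ((Λ * ρ).trace).re) :
    traceNorm (ρ - hΛ.sqrt * ρ * hΛ.sqrt) ≤ 2 * Real.sqrt ε := by
  have hρ0 : 0 ≤ ρ := hρ.nonneg
  have hΛ0 : 0 ≤ Λ := hΛ.nonneg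
  have hΛ1 : Λ ≤ 1 := le_iff.2 hΛI
  rw [hΛ.sqrt_eq_cfcSqrt]
  set X := CFC.sqrt Λ
  set B := CFC.sqrt ρ
  have hX : Xᴴ = X := (IsSelfAdjoint.of_nonneg (CFC.sqrt_nonneg Λ)).star_eq
  have hB : Bᴴ = B := (IsSelfAdjoint.of_nonneg (CFC.sqrt_nonneg ρ)).star_eq
  have hsplit : ρ - X * ρ * X = ((1 - X) * B) * Bᴴ + (X * B) * ((1 - X) * B)ᴴ := by
    rw [hB, conjTranspose_mul, hB, conjTranspose_sub, conjTranspose_one, hX,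
      ← CFC.sqrt_mul_sqrt_self ρ hρ0]
    noncomm_ring
  have hnormB : (Bᴴ * B).trace.re = 1 := by
    simpa [hρtr] using congrArg Complex.re (trace_conjTranspose_mul_self_mul_cfcSqrt hρ0 1)
  have hnormXB : ((X * B)ᴴ * (X * B)).trace.re ≤ 1 := by
    rw [trace_conjTranspose_mul_self_mul_cfcSqrt hρ0, hX, CFC.sqrt_mul_sqrt_self Λ hΛ0]
    simpa [hρtr] using re_trace_mul_le_of_le hρ0 hΛ1
  have hnormA : (((1 - X) * B)ᴴ * ((1 - X) * B)).trace.re ≤ ε := by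
    refine (re_trace_one_sub_cfcSqrt_mul_cfcSqrt_le hρ0 hΛ0 hΛ1).trans ?_
    rw [sub_mul, Matrix.one_mul, trace_sub, hρtr, Complex.sub_re, Complex.one_re]
    linarith
  have hM : (ρ - X * ρ * X).IsHermitian := by
    have hXρX := hρ.conjTranspose_mul_mul_same X
    rw [hX] at hXρX
    exact hρ.1.sub hXρX.1
  refine traceNorm_le_of_forall_unitary hM fun S hS => ?_
  rw [hsplit, Matrix.mul_add, trace_add, Complex.add_re]
  calc _ ≤ √ε * √1 + √1 * √ε := by
        gcongr
        · exact (re_trace_unitary_mul_le hS _ _).trans (by gcongr; exact hnormB.le)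
        · exact (re_trace_unitary_mul_le hS _ _).trans (by gcongr)
    _ = 2 * √ε := by rw [Real.sqrt_one]; ring
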